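/- Let P and Q be probability distributions on a finite set Ω with Q(x) > 0 for all x, and suppose e^{−ε} ≤ P(x)/Q(x) ≤ e^{ε} for all x. Then the KL divergence satisfies D(P‖Q) = Σ_x P(x) log(P(x)/Q(x)) ≤ (1/2)ε². -/

import Mathlib

/-!
Since `t ↦ t log t` is convex, on `[e^{-ε}, e^ε]` it lies below its chord; averaging the chord
bound at `t = P x / Q x` against `Q`, where the likelihood ratio has mean `1`, gives
`D(P‖Q) ≤ ε (e^ε + e^{-ε} - 2) / (e^ε - e^{-ε}) = ε tanh (ε / 2)`, and `tanh y ≤ y`.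
-/

open Finset Real

section Chord

variable {𝕜 : Type*} [Field 𝕜] [LinearOrder 𝕜] [IsStrictOrderedRing 𝕜] {s : Set 𝕜} {f : 𝕜 → 𝕜}

theorem ConvexOn.mul_le_chord (hf : ConvexOn 𝕜 s f) {x y z : 𝕜} (hx : x ∈ s) (hz : z ∈ s)
    (hy : y ∈ Set.Icc x z) : (z - x) * f y ≤ (z - y) * f x + (y - x) * f z := by
  obtain rfl | hxy := hy.1.eq_or_lt
  · simp
  obtain rfl | hyz := hy.2.eq_or_lt
  · simp
  exact hf.secant_mono_aux1 hx hz hxy hyz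

theorem ConvexOn.mul_sum_le_chord {ι : Type*} (t : Finset ι) (hf : ConvexOn 𝕜 s f) {m M : 𝕜}
    (hm : m ∈ s) (hM : M ∈ s) {w p : ι → 𝕜} (hw : ∀ i ∈ t, 0 ≤ w i) (hw₁ : ∑ i ∈ t, w i = 1)
    (hp : ∀ i ∈ t, p i ∈ Set.Icc m M) :
    (M - m) * ∑ i ∈ t, w i * f (p i) ≤
      (M - ∑ i ∈ t, w i * p i) * f m + (∑ i ∈ t, w i * p i - m) * f M := by
  calc (M - m) * ∑ i ∈ t, w i * f (p i)
      = ∑ i ∈ t, w i * ((M - m) * f (p i)) := by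
        rw [mul_sum]; exact sum_congr rfl fun i _ ↦ by ring
    _ ≤ ∑ i ∈ t, w i * ((M - p i) * f m + (p i - m) * f M) :=
        sum_le_sum fun i hi ↦ mul_le_mul_of_nonneg_left (hf.mul_le_chord hm hM (hp i hi)) (hw i hi)
    _ = (M - ∑ i ∈ t, w i * p i) * f m + (∑ i ∈ t, w i * p i - m) * f M := by
        have h : ∀ i, w i * ((M - p i) * f m + (p i - m) * f M) =
            (M * w i - w i * p i) * f m + (w i * p i - m * w i) * f M := fun i ↦ by ring
        rw [sum_congr rfl fun i _ ↦ h i, sum_add_distrib, ← sum_mul, ← sum_mul, sum_sub_distrib,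
          sum_sub_distrib, ← mul_sum, ← mul_sum, hw₁, mul_one, mul_one]

end Chord

namespace Real

theorem sinh_le_mul_cosh {x : ℝ} (hx : 0 ≤ x) : sinh x ≤ x * cosh x := by
  let g : ℝ → ℝ := fun y ↦ y * cosh y - sinh y
  have hg : ∀ y, HasDerivAt g (y * sinh y) y := fun y ↦
    (((hasDerivAt_id' y).mul (hasDerivAt_cosh y)).sub (hasDerivAt_sinh y)).congr_deriv (by ring)
  have hmono : MonotoneOn g (Set.Ici 0) := by
    refine monotoneOn_of_deriv_nonneg (convex_Ici 0) (by fun_prop)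
      (fun y _ ↦ (hg y).differentiableAt.differentiableWithinAt) fun y hy ↦ ?_
    rw [interior_Ici, Set.mem_Ioi] at hy
    rw [(hg y).deriv]
    exact mul_nonneg hy.le (sinh_nonneg_iff.2 hy.le)
  simpa [g] using hmono Set.self_mem_Ici (Set.mem_Ici.2 hx) hx

theorem two_mul_cosh_sub_one_le_mul_sinh {x : ℝ} (hx : 0 ≤ x) :
    2 * (cosh x - 1) ≤ x * sinh x := by
  obtain ⟨y, rfl⟩ : ∃ y, x = 2 * y := ⟨x / 2, by ring⟩
  have hy : 0 ≤ y := by linarith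
  rw [cosh_two_mul, sinh_two_mul, cosh_sq]
  nlinarith [mul_le_mul_of_nonneg_left (sinh_le_mul_cosh hy) (sinh_nonneg_iff.2 hy)]

end Real

theorem kl_le_of_pure_dp_general {Ω : Type*} [Fintype Ω] (P Q : Ω → ℝ) (ε : ℝ) (hε : 0 < ε)
    (hQ : ∀ x, 0 < Q x)
    (hPsum : ∑ x, P x = 1) (hQsum : ∑ x, Q x = 1)
    (hlo : ∀ x, Real.exp (-ε) ≤ P x / Q x) (hhi : ∀ x, P x / Q x ≤ Real.exp ε) :
    ∑ x, P x * Real.log (P x / Q x) ≤ (1 / 2) * ε ^ 2 := by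
  have hchord := convexOn_mul_log.mul_sum_le_chord univ (exp_pos (-ε)).le (exp_pos ε).le
    (w := Q) (p := fun x ↦ P x / Q x) (fun x _ ↦ (hQ x).le) hQsum fun x _ ↦ ⟨hlo x, hhi x⟩
  have hmean : ∑ x, Q x * (P x / Q x) = 1 := by
    rw [sum_congr rfl fun x _ ↦ mul_div_cancel₀ (P x) (hQ x).ne', hPsum]
  have hkl : ∑ x, Q x * (P x / Q x * log (P x / Q x)) = ∑ x, P x * log (P x / Q x) :=
    sum_congr rfl fun x _ ↦ by rw [← mul_assoc, mul_div_cancel₀ (P x) (hQ x).ne']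
  rw [hmean, hkl, log_exp, log_exp] at hchord
  have hexp : exp ε * exp (-ε) = 1 := by rw [← exp_add, add_neg_cancel, exp_zero]
  have key : 2 * sinh ε * ∑ x, P x * log (P x / Q x) ≤ 2 * sinh ε * (1 / 2 * ε ^ 2) :=
    calc 2 * sinh ε * ∑ x, P x * log (P x / Q x)
        = (exp ε - exp (-ε)) * ∑ x, P x * log (P x / Q x) := by rw [sinh_eq]; ring
      _ ≤ (exp ε - 1) * (exp (-ε) * -ε) + (1 - exp (-ε)) * (exp ε * ε) := hchord
      _ = ε * (2 * (cosh ε - 1)) := by rw [cosh_eq]; linear_combination (-2 * ε) * hexp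
      _ ≤ ε * (ε * sinh ε) :=
        mul_le_mul_of_nonneg_left (two_mul_cosh_sub_one_le_mul_sinh hε.le) hε.le
      _ = 2 * sinh ε * (1 / 2 * ε ^ 2) := by ring
  exact le_of_mul_le_mul_left key (by have := sinh_pos_iff.2 hε; positivity)

theorem kl_le_of_pure_dp {Ω : Type*} [Fintype Ω] (P Q : Ω → ℝ) (ε : ℝ) (hε : 0 < ε)
    (hP : ∀ x, 0 ≤ P x) (hQ : ∀ x, 0 < Q x)
    (hPsum : ∑ x, P x = 1) (hQsum : ∑ x, Q x = 1)
    (hlo : ∀ x, Real.exp (-ε) ≤ P x / Q x) (hhi : ∀ x, P x / Q x ≤ Real.exp ε) :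
    ∑ x, P x * Real.log (P x / Q x) ≤ (1 / 2) * ε ^ 2 :=
  kl_le_of_pure_dp_general P Q ε hε hQ hPsum hQsum hlo hhi
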